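/- Let n ≥ 1, let A and B be Hermitian n×n complex matrices all of whose eigenvalues lie in the open interval (−1,1) (so that A and B are G₁ operators with spectra in the open unit disk), let f, g ∈ 𝔥, and let X be an arbitrary n×n complex matrix. Then for every unitarily invariant norm N on the n×n complex matrices, N(f(A)X + Xg(B)) ≤ (2√2/(d_A d_B)) · N(|AXB| + |X|). -/

import Mathlib

/-!
For `f ∈ 𝔥`, Borel–Carathéodory gives `‖f z‖ ≤ (1 + |z|) / (1 - |z|)`, hence
`‖f λ‖ ≤ (2 - d_A) / d_A` on the spectrum of `A`. A matrix `U diag(w) V` with `U, V` unitary and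
`|wᵢ| ≤ c` is `c` times an average of two unitaries, so multiplying by it (on either side)
multiplies a unitarily invariant norm by at most `c`. This bounds `N(f(A)X + Xg(B))` by
`((2 - d_A)/d_A + (2 - d_B)/d_B) N(X)`. The polar decomposition gives `N(X) = N(|X|)`, and
unitarily invariant norms are monotone on positive semidefinite matrices, so
`N(|X|) ≤ N(|AXB| + |X|)`: if `0 ≤ P ≤ S` and `ε > 0`, then `P = K (S + ε) Kᴴ` with
`K = P^{1/2} (S + ε)^{-1/2}` a contraction, and `N(K Z Kᴴ) ≤ N(Z)` by the singular value
decomposition of `K`. Finally `(2 - a)/a + (2 - b)/b ≤ 2/(ab) ≤ 2√2/(ab)` for `a, b ∈ (0, 1]`.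
-/

open Matrix
open scoped ComplexOrder

/-- `f(A)` for a Hermitian matrix `A`, defined via the spectral decomposition:
`f(A) = U diag(f(λ₁),…,f(λₙ)) U*`. -/
noncomputable def herFun {n : ℕ} {A : Matrix (Fin n) (Fin n) ℂ} (hA : A.IsHermitian)
    (f : ℂ → ℂ) : Matrix (Fin n) (Fin n) ℂ :=
  (hA.eigenvectorUnitary : Matrix (Fin n) (Fin n) ℂ) *
    Matrix.diagonal (fun i => f (hA.eigenvalues i : ℂ)) *
    star (hA.eigenvectorUnitary : Matrix (Fin n) (Fin n) ℂ)

/-- `|X| = (X*X)^{1/2}`, the positive semidefinite absolute value of a matrix. -/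
noncomputable def matAbs {n : ℕ} (X : Matrix (Fin n) (Fin n) ℂ) : Matrix (Fin n) (Fin n) ℂ :=
  (Matrix.isHermitian_conjTranspose_mul_self X).eigenvectorUnitary.1 *
    Matrix.diagonal (((↑) : ℝ → ℂ) ∘ (√·) ∘ (Matrix.isHermitian_conjTranspose_mul_self X).eigenvalues) *
    (star (Matrix.isHermitian_conjTranspose_mul_self X).eigenvectorUnitary : Matrix (Fin n) (Fin n) ℂ)

/-- `d_A = min { 1 - |λⱼ| }`, the distance from the unit circle to the spectrum of a
Hermitian matrix `A` whose eigenvalues lie in `(-1,1)`. -/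
noncomputable def dDist {n : ℕ} {A : Matrix (Fin n) (Fin n) ℂ} (hA : A.IsHermitian) : ℝ :=
  ⨅ i, (1 - |hA.eigenvalues i|)

/-- Membership in the class `𝔥`: analytic on the open unit disk, positive real part there,
and value `1` at the origin. -/
def MemH (f : ℂ → ℂ) : Prop :=
  DifferentiableOn ℂ f (Metric.ball (0 : ℂ) 1) ∧
    (∀ z ∈ Metric.ball (0 : ℂ) 1, 0 < (f z).re) ∧ f 0 = 1

/-- A function `N` on `n × n` complex matrices is a unitarily invariant norm. -/
def IsUnitarilyInvariantNorm {m : Type*} [Fintype m] [DecidableEq m]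
    (N : Matrix m m ℂ → ℝ) : Prop :=
  (∀ X, N X = 0 ↔ X = 0) ∧
    (∀ (c : ℂ) X, N (c • X) = ‖c‖ * N X) ∧
    (∀ X Y, N (X + Y) ≤ N X + N Y) ∧
    (∀ (U V : Matrix.unitaryGroup m ℂ) (X : Matrix m m ℂ),
      N ((U : Matrix m m ℂ) * X * (V : Matrix m m ℂ)) = N X)

open Filter Topology
open scoped MatrixOrder

theorem le_of_forall_pos_le_add_mul {a b c : ℝ} (h : ∀ ε > 0, a ≤ b + ε * c) : a ≤ b := by
  have : Tendsto (fun ε : ℝ => b + ε * c) (𝓝[>] 0) (𝓝 b) :=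
    tendsto_nhdsWithin_of_tendsto_nhds <| by
      simpa using ((continuous_mul_const c).const_add b).tendsto (0 : ℝ)
  exact ge_of_tendsto this (eventually_nhdsWithin_of_forall h)

/-- Borel–Carathéodory applied to `-f`, whose real part is below every `M > 0`; then `M → 0`. -/
theorem MemH.norm_le {f : ℂ → ℂ} (hf : MemH f) {z : ℂ} (hz : ‖z‖ < 1) :
    ‖f z‖ ≤ (1 + ‖z‖) / (1 - ‖z‖) := by
  obtain ⟨hd, hre, h0⟩ := hf
  refine le_of_forall_pos_le_add_mul (c := 2 * ‖z‖ / (1 - ‖z‖)) fun M hM => ?_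
  have hneg : Set.MapsTo (-f) (Metric.ball 0 1) {w | w.re ≤ M} := fun w hw => by
    simpa using (neg_neg_of_pos (hre w hw)).le.trans hM.le
  have := Complex.borelCaratheodory hM hd.neg hneg one_pos (mem_ball_zero_iff.mpr hz)
  simp only [Pi.neg_apply, norm_neg, h0, norm_one, one_mul] at this
  linarith [show 2 * M * ‖z‖ / (1 - ‖z‖) = M * (2 * ‖z‖ / (1 - ‖z‖)) by ring]

theorem Complex.exists_eq_mul_add_of_norm_le {w : ℂ} {c : ℝ} (hw : ‖w‖ ≤ c) :
    ∃ u v : ℂ, ‖u‖ = 1 ∧ ‖v‖ = 1 ∧ w = (c / 2 : ℝ) * (u + v) := by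
  set θ := Real.arccos (‖w‖ / c)
  have hcos : c * Real.cos θ = ‖w‖ := by
    rcases (norm_nonneg w).trans hw |>.eq_or_lt with hc | hc
    · rw [← hc] at hw ⊢
      simp [le_antisymm hw (norm_nonneg w)]
    · rw [Real.cos_arccos (by linarith [div_nonneg (norm_nonneg w) hc.le])
        ((div_le_one hc).mpr hw), mul_div_cancel₀ _ hc.ne']
  refine ⟨exp ((arg w + θ : ℝ) * I), exp ((arg w - θ : ℝ) * I), norm_exp_ofReal_mul_I _,
    norm_exp_ofReal_mul_I _, ?_⟩
  calc w = ‖w‖ * exp (arg w * I) := (norm_mul_exp_arg_mul_I w).symm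
    _ = (c / 2 : ℝ) * (2 * cos θ) * exp (arg w * I) := by
      rw [← hcos, ← ofReal_cos]; push_cast; ring
    _ = _ := by
      rw [two_cos, mul_assoc, add_mul, ← exp_add, ← exp_add]
      push_cast
      ring_nf

namespace Matrix

section Diagonal

variable {m : Type*} [Fintype m] [DecidableEq m]

theorem diagonal_mem_unitaryGroup {u : m → ℂ} (hu : ∀ i, ‖u i‖ = 1) :
    diagonal u ∈ unitaryGroup m ℂ := by
  rw [mem_unitaryGroup_iff', star_eq_conjTranspose, diagonal_conjTranspose, diagonal_mul_diagonal,
    ← diagonal_one]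
  congr 1
  funext i
  simp [← Complex.normSq_eq_conj_mul_self, Complex.normSq_eq_norm_sq, hu i]

theorem exists_unitary_mul_diagonal_mul_unitary_eq_smul_add {U V : Matrix m m ℂ}
    (hU : U ∈ unitaryGroup m ℂ) (hV : V ∈ unitaryGroup m ℂ) {w : m → ℂ} {c : ℝ}
    (hw : ∀ i, ‖w i‖ ≤ c) :
    ∃ U₁ ∈ unitaryGroup m ℂ, ∃ U₂ ∈ unitaryGroup m ℂ,
      U * diagonal w * V = ((c / 2 : ℝ) : ℂ) • (U₁ + U₂) := by
  choose u v hu hv huv using fun i => Complex.exists_eq_mul_add_of_norm_le (hw i)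
  have hdiag : diagonal w = ((c / 2 : ℝ) : ℂ) • (diagonal u + diagonal v) := by
    rw [diagonal_add, ← diagonal_smul]
    exact congrArg diagonal (funext huv)
  refine ⟨U * diagonal u * V, mul_mem (mul_mem hU (diagonal_mem_unitaryGroup hu)) hV,
    U * diagonal v * V, mul_mem (mul_mem hU (diagonal_mem_unitaryGroup hv)) hV, ?_⟩
  simp only [hdiag, Matrix.mul_smul, Matrix.smul_mul, Matrix.mul_add, Matrix.add_mul]

end Diagonal

theorem exists_mem_unitaryGroup_eq_mul_of_conjTranspose_mul_self_eq {𝕜 ι : Type*}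
    [RCLike 𝕜] [Fintype ι] [DecidableEq ι] {X Y : Matrix ι ι 𝕜} (h : Xᴴ * X = Yᴴ * Y) :
    ∃ W ∈ unitaryGroup ι 𝕜, X = W * Y := by
  let T := toEuclideanCLM (𝕜 := 𝕜) (n := ι)
  set x := T X
  set y := T Y
  have hxy : ∀ v, ‖x v‖ = ‖y v‖ := by
    have hT := congrArg T h
    rw [← star_eq_conjTranspose, ← star_eq_conjTranspose, map_mul, map_mul, map_star,
      map_star] at hT
    intro v
    rw [← sq_eq_sq₀ (norm_nonneg _) (norm_nonneg _),
      ContinuousLinearMap.apply_norm_sq_eq_inner_adjoint_left,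
      ContinuousLinearMap.apply_norm_sq_eq_inner_adjoint_left,
      ← ContinuousLinearMap.star_eq_adjoint, ← ContinuousLinearMap.star_eq_adjoint,
      ← ContinuousLinearMap.mul_def, ← ContinuousLinearMap.mul_def, hT]
  have hker : LinearMap.ker y.toLinearMap ≤ LinearMap.ker x.toLinearMap := fun v hv => by
    simpa [← norm_eq_zero (a := x v), hxy] using hv
  -- `y v ↦ x v` is a well-defined isometry on the range of `y`; `W` is a unitary extension of it
  let L₀ := (LinearMap.ker _).liftQ _ hker ∘ₗ y.toLinearMap.quotKerEquivRange.symm.toLinearMap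
  have hL₀ : ∀ v, L₀ ⟨y v, LinearMap.mem_range_self _ v⟩ = x v := fun v => by
    simp only [L₀, LinearMap.comp_apply, LinearEquiv.coe_coe]
    erw [LinearMap.quotKerEquivRange_symm_apply_image]
    rfl
  let L : LinearMap.range y.toLinearMap →ₗᵢ[𝕜] EuclideanSpace 𝕜 ι :=
    { L₀ with norm_map' := by rintro ⟨_, v, rfl⟩; simp [hL₀, hxy] }
  set E := L.extend.toContinuousLinearMap
  have hE : E * y = x := by
    ext v : 1
    exact (L.extend_apply ⟨y v, LinearMap.mem_range_self _ v⟩).trans (hL₀ v)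
  refine ⟨T.symm E, ?_, ?_⟩
  · have hstar : star (T.symm E) = T.symm (star E) := (map_star T.symm E).symm
    rw [mem_unitaryGroup_iff', hstar, ← map_mul, ContinuousLinearMap.star_eq_adjoint,
      ContinuousLinearMap.mul_def, LinearIsometry.adjoint_comp_self, map_one]
  · rw [← T.symm_apply_apply X, ← T.symm_apply_apply Y, ← map_mul]
    exact congrArg T.symm hE.symm

end Matrix

section MatAbs

variable {n : ℕ}

theorem matAbs_eq_abs (X : Matrix (Fin n) (Fin n) ℂ) : matAbs X = CFC.abs X := by
  rw [CFC.abs, star_eq_conjTranspose,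
    CFC.sqrt_eq_real_sqrt _ (posSemidef_conjTranspose_mul_self X).nonneg, cfcₙ_eq_cfc,
    (isHermitian_conjTranspose_mul_self X).cfc_eq, IsHermitian.cfc,
    Unitary.conjStarAlgAut_apply, matAbs]
  rfl

theorem matAbs_nonneg (X : Matrix (Fin n) (Fin n) ℂ) : 0 ≤ matAbs X :=
  matAbs_eq_abs X ▸ CFC.abs_nonneg X

theorem exists_mem_unitaryGroup_eq_mul_matAbs (X : Matrix (Fin n) (Fin n) ℂ) :
    ∃ W ∈ unitaryGroup (Fin n) ℂ, X = W * matAbs X := by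
  refine exists_mem_unitaryGroup_eq_mul_of_conjTranspose_mul_self_eq ?_
  rw [(matAbs_nonneg X).posSemidef.isHermitian.eq, matAbs_eq_abs, CFC.abs_mul_abs,
    star_eq_conjTranspose]

theorem Matrix.exists_eq_unitary_mul_diagonal_mul_unitary (K : Matrix (Fin n) (Fin n) ℂ) :
    ∃ U ∈ unitaryGroup (Fin n) ℂ, ∃ V ∈ unitaryGroup (Fin n) ℂ, ∃ s : Fin n → ℝ,
      (∀ i, 0 ≤ s i ∧ s i ^ 2 ∈ spectrum ℝ (Kᴴ * K)) ∧
        K = U * diagonal (fun i => (s i : ℂ)) * V := by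
  obtain ⟨W, hW, hK⟩ := exists_mem_unitaryGroup_eq_mul_matAbs K
  have hKK := posSemidef_conjTranspose_mul_self K
  set E := hKK.isHermitian.eigenvectorUnitary
  refine ⟨W * E, mul_mem hW E.2, star E, (star E).2, fun i => √(hKK.isHermitian.eigenvalues i),
    fun i => ⟨Real.sqrt_nonneg _, ?_⟩, ?_⟩
  · rw [Real.sq_sqrt (hKK.eigenvalues_nonneg i)]
    exact hKK.isHermitian.eigenvalues_mem_spectrum_real i
  · rw [Matrix.mul_assoc W, Matrix.mul_assoc W]
    exact hK

end MatAbs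

namespace IsUnitarilyInvariantNorm

section General

variable {m : Type*} [Fintype m] [DecidableEq m] {N : Matrix m m ℂ → ℝ}

theorem nonneg (hN : IsUnitarilyInvariantNorm N) (X : Matrix m m ℂ) : 0 ≤ N X := by
  have h := hN.2.2.1 X ((-1 : ℂ) • X)
  rw [hN.2.1, neg_one_smul, add_neg_cancel, (hN.1 0).mpr rfl, norm_neg, norm_one, one_mul] at h
  linarith

theorem map_unitary_mul (hN : IsUnitarilyInvariantNorm N) {U : Matrix m m ℂ}
    (hU : U ∈ unitaryGroup m ℂ) (X : Matrix m m ℂ) : N (U * X) = N X := by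
  simpa using hN.2.2.2 ⟨U, hU⟩ 1 X

theorem map_mul_unitary (hN : IsUnitarilyInvariantNorm N) {U : Matrix m m ℂ}
    (hU : U ∈ unitaryGroup m ℂ) (X : Matrix m m ℂ) : N (X * U) = N X := by
  simpa using hN.2.2.2 1 ⟨U, hU⟩ X

theorem map_unitary_diagonal_unitary_mul_le (hN : IsUnitarilyInvariantNorm N)
    {U V : Matrix m m ℂ} (hU : U ∈ unitaryGroup m ℂ) (hV : V ∈ unitaryGroup m ℂ) {w : m → ℂ}
    {c : ℝ} (hc : 0 ≤ c) (hw : ∀ i, ‖w i‖ ≤ c) (Y : Matrix m m ℂ) :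
    N (U * diagonal w * V * Y) ≤ c * N Y := by
  obtain ⟨U₁, hU₁, U₂, hU₂, h⟩ := exists_unitary_mul_diagonal_mul_unitary_eq_smul_add hU hV hw
  calc N (U * diagonal w * V * Y) = c / 2 * N (U₁ * Y + U₂ * Y) := by
        rw [h, smul_mul, add_mul, hN.2.1, Complex.norm_real, Real.norm_of_nonneg (by linarith)]
    _ ≤ c / 2 * (N Y + N Y) := by
        gcongr
        simpa only [hN.map_unitary_mul hU₁, hN.map_unitary_mul hU₂] using
          hN.2.2.1 (U₁ * Y) (U₂ * Y)
    _ = c * N Y := by ring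

theorem map_mul_unitary_diagonal_unitary_le (hN : IsUnitarilyInvariantNorm N)
    {U V : Matrix m m ℂ} (hU : U ∈ unitaryGroup m ℂ) (hV : V ∈ unitaryGroup m ℂ) {w : m → ℂ}
    {c : ℝ} (hc : 0 ≤ c) (hw : ∀ i, ‖w i‖ ≤ c) (Y : Matrix m m ℂ) :
    N (Y * (U * diagonal w * V)) ≤ c * N Y := by
  obtain ⟨U₁, hU₁, U₂, hU₂, h⟩ := exists_unitary_mul_diagonal_mul_unitary_eq_smul_add hU hV hw
  calc N (Y * (U * diagonal w * V)) = c / 2 * N (Y * U₁ + Y * U₂) := by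
        rw [h, Matrix.mul_smul, Matrix.mul_add, hN.2.1, Complex.norm_real,
          Real.norm_of_nonneg (by linarith)]
    _ ≤ c / 2 * (N Y + N Y) := by
        gcongr
        simpa only [hN.map_mul_unitary hU₁, hN.map_mul_unitary hU₂] using
          hN.2.2.1 (Y * U₁) (Y * U₂)
    _ = c * N Y := by ring

end General

variable {n : ℕ} {N : Matrix (Fin n) (Fin n) ℂ → ℝ}

theorem map_matAbs (hN : IsUnitarilyInvariantNorm N) (X : Matrix (Fin n) (Fin n) ℂ) :
    N (matAbs X) = N X := by
  obtain ⟨W, hW, hX⟩ := exists_mem_unitaryGroup_eq_mul_matAbs X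
  conv_rhs => rw [hX]
  exact (hN.map_unitary_mul hW _).symm

theorem map_herFun_mul_le (hN : IsUnitarilyInvariantNorm N) {A : Matrix (Fin n) (Fin n) ℂ}
    (hA : A.IsHermitian) {f : ℂ → ℂ} {c : ℝ} (hc : 0 ≤ c)
    (hf : ∀ i, ‖f (hA.eigenvalues i)‖ ≤ c) (X : Matrix (Fin n) (Fin n) ℂ) :
    N (herFun hA f * X) ≤ c * N X :=
  hN.map_unitary_diagonal_unitary_mul_le hA.eigenvectorUnitary.2
    (Unitary.star_mem hA.eigenvectorUnitary.2) hc hf X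

theorem map_mul_herFun_le (hN : IsUnitarilyInvariantNorm N) {A : Matrix (Fin n) (Fin n) ℂ}
    (hA : A.IsHermitian) {f : ℂ → ℂ} {c : ℝ} (hc : 0 ≤ c)
    (hf : ∀ i, ‖f (hA.eigenvalues i)‖ ≤ c) (X : Matrix (Fin n) (Fin n) ℂ) :
    N (X * herFun hA f) ≤ c * N X :=
  hN.map_mul_unitary_diagonal_unitary_le hA.eigenvectorUnitary.2
    (Unitary.star_mem hA.eigenvectorUnitary.2) hc hf X

theorem map_mul_mul_conjTranspose_le (hN : IsUnitarilyInvariantNorm N)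
    {K : Matrix (Fin n) (Fin n) ℂ} (hK : Kᴴ * K ≤ 1) (Z : Matrix (Fin n) (Fin n) ℂ) :
    N (K * Z * Kᴴ) ≤ N Z := by
  obtain ⟨U, hU, V, hV, s, hs, hUV⟩ := exists_eq_unitary_mul_diagonal_mul_unitary K
  have hs₁ : ∀ i, ‖(s i : ℂ)‖ ≤ 1 := fun i => by
    have := (le_algebraMap_iff_spectrum_le
      (isHermitian_conjTranspose_mul_self K).isSelfAdjoint).mp (by rwa [map_one]) _ (hs i).2
    rw [Complex.norm_real, Real.norm_of_nonneg (hs i).1]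
    nlinarith [(hs i).1]
  have hUV' : Kᴴ = Vᴴ * diagonal (fun i => (s i : ℂ)) * Uᴴ := by
    rw [hUV, conjTranspose_mul, conjTranspose_mul, diagonal_conjTranspose, Matrix.mul_assoc]
    congr 3
    funext i
    simp
  calc N (K * Z * Kᴴ) = N (U * diagonal (fun i => (s i : ℂ)) * V * (Z * Kᴴ)) := by
        rw [← hUV, Matrix.mul_assoc]
    _ ≤ 1 * N (Z * Kᴴ) := hN.map_unitary_diagonal_unitary_mul_le hU hV zero_le_one hs₁ _
    _ ≤ 1 * (1 * N Z) := by
      rw [hUV']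
      gcongr
      exact hN.map_mul_unitary_diagonal_unitary_le (Unitary.star_mem hV) (Unitary.star_mem hU)
        zero_le_one hs₁ Z
    _ = N Z := by ring

theorem map_le_map_of_le (hN : IsUnitarilyInvariantNorm N) {P S : Matrix (Fin n) (Fin n) ℂ}
    (hP : 0 ≤ P) (hPS : P ≤ S) : N P ≤ N S := by
  refine le_of_forall_pos_le_add_mul (c := N 1) fun ε hε => ?_
  have hε₁ : ((ε : ℂ) • 1 : Matrix (Fin n) (Fin n) ℂ).PosDef :=
    PosDef.one.smul (by exact_mod_cast hε)
  set Sε := S + (ε : ℂ) • 1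
  have hSε : IsStrictlyPositive Sε :=
    (PosDef.posSemidef_add (hP.trans hPS).posSemidef hε₁).isStrictlyPositive
  set T := CFC.sqrt P
  set q := CFC.sqrt Sε
  have hq : IsUnit q.det :=
    (isUnit_iff_isUnit_det q).mp (CFC.isUnit_sqrt_iff_isStrictlyPositive.mpr hSε)
  have hqH : q⁻¹ᴴ = q⁻¹ := by
    rw [conjTranspose_nonsing_inv, (CFC.sqrt_nonneg Sε).posSemidef.isHermitian.eq]
  have hTH : Tᴴ = T := (CFC.sqrt_nonneg P).posSemidef.isHermitian.eq
  have hTT : T * T = P := CFC.sqrt_mul_sqrt_self P hP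
  have hq₁ : q⁻¹ * Sε * q⁻¹ = 1 := by
    rw [← CFC.sqrt_mul_sqrt_self Sε hSε.nonneg, ← Matrix.mul_assoc, nonsing_inv_mul _ hq,
      Matrix.one_mul, mul_nonsing_inv _ hq]
  have hK : (T * q⁻¹)ᴴ * (T * q⁻¹) ≤ 1 := calc
    (T * q⁻¹)ᴴ * (T * q⁻¹) = q⁻¹ * P * q⁻¹ := by
      rw [conjTranspose_mul, hqH, hTH, ← hTT]
      simp only [Matrix.mul_assoc]
    _ ≤ q⁻¹ * Sε * q⁻¹ := by
      have hSSε : S ≤ Sε := le_add_of_nonneg_right hε₁.posSemidef.nonneg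
      have := star_left_conjugate_le_conjugate (hPS.trans hSSε) q⁻¹
      rwa [star_eq_conjTranspose, hqH] at this
    _ = 1 := hq₁
  calc N P = N (T * q⁻¹ * Sε * (T * q⁻¹)ᴴ) := by
        rw [conjTranspose_mul, hqH, hTH, ← hTT]
        congr 1
        calc T * T = T * (q⁻¹ * Sε * q⁻¹) * T := by rw [hq₁, Matrix.mul_one]
          _ = _ := by simp only [Matrix.mul_assoc]
    _ ≤ N Sε := hN.map_mul_mul_conjTranspose_le hK Sε
    _ ≤ N S + N ((ε : ℂ) • 1) := hN.2.2.1 _ _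
    _ = N S + ε * N 1 := by rw [hN.2.1, Complex.norm_real, Real.norm_of_nonneg hε.le]

end IsUnitarilyInvariantNorm

section DDist

variable {n : ℕ} {A : Matrix (Fin n) (Fin n) ℂ}

theorem dDist_le (hA : A.IsHermitian) (i : Fin n) : dDist hA ≤ 1 - |hA.eigenvalues i| :=
  have : Nonempty (Fin n) := ⟨i⟩
  ciInf_le (Set.finite_range _).bddBelow i

theorem dDist_le_one [Nonempty (Fin n)] (hA : A.IsHermitian) : dDist hA ≤ 1 :=
  (dDist_le hA (Classical.arbitrary _)).trans (by simp)

theorem dDist_pos [Nonempty (Fin n)] (hA : A.IsHermitian)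
    (hAspec : ∀ i, |hA.eigenvalues i| < 1) : 0 < dDist hA := by
  obtain ⟨i, hi⟩ := exists_eq_ciInf_of_finite (f := fun i => 1 - |hA.eigenvalues i|)
  rw [dDist, ← hi]
  linarith [hAspec i]

theorem MemH.norm_apply_eigenvalues_le {f : ℂ → ℂ} (hf : MemH f) (hA : A.IsHermitian)
    (hd : 0 < dDist hA) (i : Fin n) : ‖f (hA.eigenvalues i)‖ ≤ (2 - dDist hA) / dDist hA := by
  have ht := dDist_le hA i
  have hlt : ‖((hA.eigenvalues i : ℝ) : ℂ)‖ < 1 := by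
    rw [Complex.norm_real, Real.norm_eq_abs]
    linarith
  refine (hf.norm_le hlt).trans ?_
  rw [Complex.norm_real, Real.norm_eq_abs, div_le_div_iff₀ (by linarith) hd]
  nlinarith [abs_nonneg (hA.eigenvalues i)]

end DDist

theorem two_sub_div_add_two_sub_div_le {a b : ℝ} (ha : 0 < a) (ha₁ : a ≤ 1) (hb : 0 < b)
    (hb₁ : b ≤ 1) : (2 - a) / a + (2 - b) / b ≤ 2 * √2 / (a * b) := by
  rw [div_add_div _ _ ha.ne' hb.ne', div_le_div_iff_of_pos_right (mul_pos ha hb)]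
  nlinarith [Real.one_lt_sqrt_two, mul_nonneg (sub_nonneg.2 ha₁) (sub_nonneg.2 hb₁)]

/-- **Theorem 3.1 (first inequality), Hermitian matrix case.** -/
theorem stmt9 {n : ℕ} (hn : 1 ≤ n)
    {A B : Matrix (Fin n) (Fin n) ℂ} (hA : A.IsHermitian) (hB : B.IsHermitian)
    (hAspec : ∀ i, |hA.eigenvalues i| < 1) (hBspec : ∀ i, |hB.eigenvalues i| < 1)
    {f g : ℂ → ℂ} (hf : MemH f) (hg : MemH g)
    (X : Matrix (Fin n) (Fin n) ℂ)
    (N : Matrix (Fin n) (Fin n) ℂ → ℝ) (hN : IsUnitarilyInvariantNorm N) :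
    N (herFun hA f * X + X * herFun hB g) ≤
      (2 * Real.sqrt 2 / (dDist hA * dDist hB)) * N (matAbs (A * X * B) + matAbs X) := by
  have : Nonempty (Fin n) := ⟨⟨0, hn⟩⟩
  have hdA := dDist_pos hA hAspec
  have hdB := dDist_pos hB hBspec
  have hcA : 0 ≤ (2 - dDist hA) / dDist hA := div_nonneg (by linarith [dDist_le_one hA]) hdA.le
  have hcB : 0 ≤ (2 - dDist hB) / dDist hB := div_nonneg (by linarith [dDist_le_one hB]) hdB.le
  calc N (herFun hA f * X + X * herFun hB g)
      ≤ (2 - dDist hA) / dDist hA * N X + (2 - dDist hB) / dDist hB * N X :=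
        (hN.2.2.1 _ _).trans <| add_le_add
          (hN.map_herFun_mul_le hA hcA (hf.norm_apply_eigenvalues_le hA hdA) X)
          (hN.map_mul_herFun_le hB hcB (hg.norm_apply_eigenvalues_le hB hdB) X)
    _ = ((2 - dDist hA) / dDist hA + (2 - dDist hB) / dDist hB) * N (matAbs X) := by
        rw [hN.map_matAbs, add_mul]
    _ ≤ (2 * Real.sqrt 2 / (dDist hA * dDist hB)) * N (matAbs (A * X * B) + matAbs X) :=
        mul_le_mul (two_sub_div_add_two_sub_div_le hdA (dDist_le_one hA) hdB (dDist_le_one hB))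
          (hN.map_le_map_of_le (matAbs_nonneg X) (le_add_of_nonneg_left (matAbs_nonneg _)))
          (hN.nonneg _) (div_nonneg (by positivity) (mul_pos hdA hdB).le)
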